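/- Let A, B, X, Y be bounded linear operators on a complex Hilbert space H. Then w(AXB ± BYA) ≤ 2√2 · ‖B‖ · max{‖X‖, ‖Y‖} · √( w(A)² − (1/4)| ‖Re(A) + Im(A)‖² − ‖Re(A) − Im(A)‖² | ). -/

import Mathlib

open ContinuousLinearMap Complex

variable {H : Type*} [NormedAddCommGroup H] [InnerProductSpace ℂ H] [CompleteSpace H]

noncomputable def nrad (A : H →L[ℂ] H) : ℝ :=
  ⨆ x : {x : H // ‖x‖ = 1}, ‖(inner ℂ (A x) (x : H) : ℂ)‖

noncomputable def reP (A : H →L[ℂ] H) : H →L[ℂ] H := (2 : ℂ)⁻¹ • (A + adjoint A)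
noncomputable def imP (A : H →L[ℂ] H) : H →L[ℂ] H := (2 * Complex.I)⁻¹ • (A - adjoint A)

noncomputable def oabs (A : H →L[ℂ] H) : H →L[ℂ] H := cfc Real.sqrt (adjoint A * A)

noncomputable def opow (T : H →L[ℂ] H) (r : ℝ) : H →L[ℂ] H := cfc (fun t : ℝ => t ^ r) T

/-!
Put `S = Re A + Im A` and `D = Re A - Im A`. Both are self-adjoint with quadratic forms
`Re⟨Ax, x⟩ ∓ Im⟨Ax, x⟩`, so `‖S‖, ‖D‖ ≤ √2 w(A)`, and therefore
`‖S‖² + ‖D‖² = 2 max (‖S‖², ‖D‖²) - |‖S‖² - ‖D‖²| ≤ 4 w(A)² - |‖S‖² - ‖D‖²|`.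
Since `A = Re A + i Im A` and `A* = Re A - i Im A`, the parallelogram law gives
`‖Sx‖² + ‖Dx‖² = ‖Ax‖² + ‖A*x‖²`, which bounds `‖Ax‖ + ‖A*x‖` on unit vectors.
Finally `|⟨AXBx, x⟩| + |⟨BYAx, x⟩| ≤ ‖B‖ max (‖X‖, ‖Y‖) (‖A*x‖ + ‖Ax‖)` by Cauchy–Schwarz.
-/

open scoped InnerProductSpace

namespace ContinuousLinearMap

variable {𝕜 E : Type*} [RCLike 𝕜] [NormedAddCommGroup E] [InnerProductSpace 𝕜 E]

theorem norm_le_of_forall_abs_re_inner_le {T : E →L[𝕜] E} (hT : (T : E →ₗ[𝕜] E).IsSymmetric)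
    {M : ℝ} (hM : 0 ≤ M) (h : ∀ x, |RCLike.re ⟪T x, x⟫_𝕜| ≤ M * ‖x‖ ^ 2) : ‖T‖ ≤ M := by
  rw [T.norm_eq_iSup_rayleighQuotient hT]
  refine ciSup_le fun x => ?_
  rw [rayleighQuotient, reApplyInnerSelf_apply, abs_div, abs_sq]
  exact div_le_of_le_mul₀ (sq_nonneg _) hM (h x)

variable [CompleteSpace E]

theorem norm_inner_mul_mul_apply_le (P Q R : E →L[𝕜] E) (x : E) :
    ‖⟪(P * Q * R) x, x⟫_𝕜‖ ≤ ‖adjoint P x‖ * ‖Q‖ * ‖R x‖ := by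
  rw [mul_apply_eq_comp, mul_apply_eq_comp, ← adjoint_inner_right]
  calc ‖⟪Q (R x), adjoint P x⟫_𝕜‖ ≤ ‖Q (R x)‖ * ‖adjoint P x‖ := norm_inner_le_norm _ _
    _ ≤ ‖Q‖ * ‖R x‖ * ‖adjoint P x‖ := by gcongr; exact Q.le_opNorm _
    _ = ‖adjoint P x‖ * ‖Q‖ * ‖R x‖ := by ring

theorem norm_inner_mul_mul_add_norm_inner_mul_mul_le (A B X Y : E →L[𝕜] E) (x : E) :
    ‖⟪(A * X * B) x, x⟫_𝕜‖ + ‖⟪(B * Y * A) x, x⟫_𝕜‖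
      ≤ ‖B‖ * max ‖X‖ ‖Y‖ * (‖A x‖ + ‖adjoint A x‖) * ‖x‖ := by
  have hB : ‖B x‖ ≤ ‖B‖ * ‖x‖ := B.le_opNorm x
  have hB' : ‖adjoint B x‖ ≤ ‖B‖ * ‖x‖ := by
    simpa only [LinearIsometryEquiv.norm_map] using (adjoint B).le_opNorm x
  have hX : ‖X‖ ≤ max ‖X‖ ‖Y‖ := le_max_left _ _
  have hY : ‖Y‖ ≤ max ‖X‖ ‖Y‖ := le_max_right _ _
  calc ‖⟪(A * X * B) x, x⟫_𝕜‖ + ‖⟪(B * Y * A) x, x⟫_𝕜‖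
      ≤ ‖adjoint A x‖ * ‖X‖ * ‖B x‖ + ‖adjoint B x‖ * ‖Y‖ * ‖A x‖ :=
        add_le_add (norm_inner_mul_mul_apply_le _ _ _ x) (norm_inner_mul_mul_apply_le _ _ _ x)
    _ ≤ ‖adjoint A x‖ * max ‖X‖ ‖Y‖ * (‖B‖ * ‖x‖) + ‖B‖ * ‖x‖ * max ‖X‖ ‖Y‖ * ‖A x‖ := by
        gcongr
    _ = ‖B‖ * max ‖X‖ ‖Y‖ * (‖A x‖ + ‖adjoint A x‖) * ‖x‖ := by ring

end ContinuousLinearMap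

theorem Complex.abs_re_add_im_le (z : ℂ) : |z.re + z.im| ≤ √2 * ‖z‖ := by
  have h : (z.re + z.im) ^ 2 ≤ 2 * ‖z‖ ^ 2 := by
    rw [Complex.sq_norm, Complex.normSq_apply]
    nlinarith [sq_nonneg (z.re - z.im)]
  calc |z.re + z.im| ≤ √(2 * ‖z‖ ^ 2) := Real.abs_le_sqrt h
    _ = √2 * ‖z‖ := by rw [Real.sqrt_mul zero_le_two, Real.sqrt_sq (norm_nonneg z)]

theorem Complex.abs_re_sub_im_le (z : ℂ) : |z.re - z.im| ≤ √2 * ‖z‖ := by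
  simpa [sub_eq_add_neg] using abs_re_add_im_le (starRingEnd ℂ z)

section NumericalRadius

variable {E : Type*} [NormedAddCommGroup E] [InnerProductSpace ℂ E]

theorem nrad_nonneg (A : E →L[ℂ] E) : 0 ≤ nrad A :=
  Real.iSup_nonneg fun _ => norm_nonneg _

theorem nrad_le {T : E →L[ℂ] E} {M : ℝ} (hM : 0 ≤ M)
    (h : ∀ x : E, ‖x‖ = 1 → ‖⟪T x, x⟫_ℂ‖ ≤ M) : nrad T ≤ M :=
  Real.iSup_le (fun x => h x x.2) hM

theorem norm_inner_le_nrad (A : E →L[ℂ] E) {x : E} (hx : ‖x‖ = 1) : ‖⟪A x, x⟫_ℂ‖ ≤ nrad A := by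
  refine le_ciSup (f := fun y : {y : E // ‖y‖ = 1} => ‖⟪A y, (y : E)⟫_ℂ‖) ⟨‖A‖, ?_⟩ ⟨x, hx⟩
  rintro _ ⟨y, rfl⟩
  calc ‖⟪A y, (y : E)⟫_ℂ‖ ≤ ‖A y‖ * ‖(y : E)‖ := norm_inner_le_norm _ _
    _ ≤ ‖A‖ * ‖(y : E)‖ * ‖(y : E)‖ := by gcongr; exact A.le_opNorm _
    _ = ‖A‖ := by rw [y.2, mul_one, mul_one]

theorem norm_inner_le_nrad_mul_sq (A : E →L[ℂ] E) (x : E) : ‖⟪A x, x⟫_ℂ‖ ≤ nrad A * ‖x‖ ^ 2 := by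
  rcases eq_or_ne x 0 with rfl | hx
  · simp
  have hu : ‖(‖x‖ : ℂ)⁻¹ • x‖ = 1 := by
    rw [norm_smul, norm_inv, Complex.norm_real, norm_norm, inv_mul_cancel₀ (norm_ne_zero_iff.2 hx)]
  have := norm_inner_le_nrad A hu
  rw [map_smul, inner_smul_left, inner_smul_right, norm_mul, norm_mul, RCLike.norm_conj,
    norm_inv, Complex.norm_real, norm_norm, ← mul_assoc, ← sq, inv_pow,
    inv_mul_le_iff₀ (by positivity)] at this
  linarith

variable [CompleteSpace E]

theorem inner_reP_apply_self (A : E →L[ℂ] E) (x : E) : ⟪reP A x, x⟫_ℂ = (⟪A x, x⟫_ℂ).re := by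
  rw [reP, smul_apply, add_apply, inner_smul_left, inner_add_left, adjoint_inner_left,
    ← inner_conj_symm x, Complex.add_conj, map_inv₀, map_ofNat]
  push_cast
  ring

theorem inner_imP_apply_self (A : E →L[ℂ] E) (x : E) : ⟪imP A x, x⟫_ℂ = -(⟪A x, x⟫_ℂ).im := by
  rw [imP, smul_apply, sub_apply, inner_smul_left, inner_sub_left, adjoint_inner_left,
    ← inner_conj_symm x, Complex.sub_conj, map_inv₀, map_mul, map_ofNat, Complex.conj_I]
  field_simp
  push_cast
  ring

theorem reP_eq_realPart (A : E →L[ℂ] E) : reP A = (realPart A : E →L[ℂ] E) := by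
  rw [realPart_apply_coe, reP, star_eq_adjoint, ← Complex.coe_smul]
  norm_num

theorem imP_eq_imaginaryPart (A : E →L[ℂ] E) : imP A = (imaginaryPart A : E →L[ℂ] E) := by
  rw [imaginaryPart_apply_coe, imP, star_eq_adjoint, ← Complex.coe_smul, smul_smul]
  congr 1
  field_simp
  norm_num

theorem isSelfAdjoint_reP (A : E →L[ℂ] E) : IsSelfAdjoint (reP A) :=
  reP_eq_realPart A ▸ (realPart A).2

theorem isSelfAdjoint_imP (A : E →L[ℂ] E) : IsSelfAdjoint (imP A) :=
  imP_eq_imaginaryPart A ▸ (imaginaryPart A).2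

theorem reP_add_I_smul_imP (A : E →L[ℂ] E) : reP A + I • imP A = A := by
  rw [reP_eq_realPart, imP_eq_imaginaryPart, realPart_add_I_smul_imaginaryPart]

theorem reP_sub_I_smul_imP (A : E →L[ℂ] E) : reP A - I • imP A = adjoint A := by
  rw [← star_eq_adjoint, ← congrArg star (reP_add_I_smul_imP A), star_add, star_smul,
    (isSelfAdjoint_reP A).star_eq, (isSelfAdjoint_imP A).star_eq, Complex.star_def, conj_I,
    neg_smul, sub_eq_add_neg]

theorem norm_reP_add_imP_apply_sq_add_norm_reP_sub_imP_apply_sq (A : E →L[ℂ] E) (x : E) :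
    ‖(reP A + imP A) x‖ ^ 2 + ‖(reP A - imP A) x‖ ^ 2 = ‖A x‖ ^ 2 + ‖adjoint A x‖ ^ 2 := by
  have h₁ := parallelogram_law_with_norm ℂ (reP A x) (imP A x)
  have h₂ := parallelogram_law_with_norm ℂ (reP A x) (I • imP A x)
  rw [norm_smul, Complex.norm_I, one_mul] at h₂
  have hA : reP A x + I • imP A x = A x := DFunLike.congr_fun (reP_add_I_smul_imP A) x
  have hA' : reP A x - I • imP A x = adjoint A x := DFunLike.congr_fun (reP_sub_I_smul_imP A) x
  rw [hA, hA'] at h₂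
  rw [add_apply, sub_apply, sq, sq, sq, sq]
  linarith

theorem norm_reP_add_imP_le (A : E →L[ℂ] E) : ‖reP A + imP A‖ ≤ √2 * nrad A := by
  have hS : IsSelfAdjoint (reP A + imP A) :=
    (isSelfAdjoint_reP A).add (isSelfAdjoint_imP A)
  refine norm_le_of_forall_abs_re_inner_le hS.isSymmetric (by positivity [nrad_nonneg A]) fun x => ?_
  rw [add_apply, inner_add_left, inner_reP_apply_self, inner_imP_apply_self, ← sub_eq_add_neg,
    ← ofReal_sub, RCLike.re_to_complex, ofReal_re, mul_assoc]
  calc _ ≤ √2 * ‖⟪A x, x⟫_ℂ‖ := Complex.abs_re_sub_im_le _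
    _ ≤ √2 * (nrad A * ‖x‖ ^ 2) := by gcongr; exact norm_inner_le_nrad_mul_sq A x

theorem norm_reP_sub_imP_le (A : E →L[ℂ] E) : ‖reP A - imP A‖ ≤ √2 * nrad A := by
  have hS : IsSelfAdjoint (reP A - imP A) :=
    (isSelfAdjoint_reP A).sub (isSelfAdjoint_imP A)
  refine norm_le_of_forall_abs_re_inner_le hS.isSymmetric (by positivity [nrad_nonneg A]) fun x => ?_
  rw [sub_apply, inner_sub_left, inner_reP_apply_self, inner_imP_apply_self, sub_neg_eq_add,
    ← ofReal_add, RCLike.re_to_complex, ofReal_re, mul_assoc]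
  calc _ ≤ √2 * ‖⟪A x, x⟫_ℂ‖ := Complex.abs_re_add_im_le _
    _ ≤ √2 * (nrad A * ‖x‖ ^ 2) := by gcongr; exact norm_inner_le_nrad_mul_sq A x

theorem norm_apply_add_norm_adjoint_apply_le (A : E →L[ℂ] E) {x : E} (hx : ‖x‖ = 1) :
    ‖A x‖ + ‖adjoint A x‖ ≤ 2 * √2 *
      √(nrad A ^ 2 - 1 / 4 * |‖reP A + imP A‖ ^ 2 - ‖reP A - imP A‖ ^ 2|) := by
  set a := ‖reP A + imP A‖
  set b := ‖reP A - imP A‖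
  set t := nrad A ^ 2 - 1 / 4 * |a ^ 2 - b ^ 2| with ht
  have ha : a ^ 2 ≤ 2 * nrad A ^ 2 := by
    calc a ^ 2 ≤ (√2 * nrad A) ^ 2 := by gcongr; exact norm_reP_add_imP_le A
      _ = 2 * nrad A ^ 2 := by rw [mul_pow, Real.sq_sqrt zero_le_two]
  have hb : b ^ 2 ≤ 2 * nrad A ^ 2 := by
    calc b ^ 2 ≤ (√2 * nrad A) ^ 2 := by gcongr; exact norm_reP_sub_imP_le A
      _ = 2 * nrad A ^ 2 := by rw [mul_pow, Real.sq_sqrt zero_le_two]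
  have hab : a ^ 2 + b ^ 2 ≤ 4 * t := by
    rcases abs_cases (a ^ 2 - b ^ 2) with ⟨h, -⟩ | ⟨h, -⟩ <;> rw [ht, h] <;> linarith
  have hAx : ‖A x‖ ^ 2 + ‖adjoint A x‖ ^ 2 ≤ 4 * t := by
    rw [← norm_reP_add_imP_apply_sq_add_norm_reP_sub_imP_apply_sq]
    have hax : ‖(reP A + imP A) x‖ ≤ a := by simpa [hx] using (reP A + imP A).le_opNorm x
    have hbx : ‖(reP A - imP A) x‖ ≤ b := by simpa [hx] using (reP A - imP A).le_opNorm x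
    grw [hax, hbx]
    exact hab
  have ht_nonneg : 0 ≤ t := by nlinarith
  rw [← pow_le_pow_iff_left₀ (by positivity) (by positivity) two_ne_zero, mul_pow, mul_pow,
    Real.sq_sqrt zero_le_two, Real.sq_sqrt ht_nonneg]
  nlinarith [sq_nonneg (‖A x‖ - ‖adjoint A x‖)]

end NumericalRadius

theorem stmt15 (A B X Y : H →L[ℂ] H) :
    nrad (A * X * B + B * Y * A)
      ≤ 2 * Real.sqrt 2 * ‖B‖ * max ‖X‖ ‖Y‖
        * Real.sqrt ((nrad A) ^ 2 - (1/4) * |‖reP A + imP A‖ ^ 2 - ‖reP A - imP A‖ ^ 2|)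
    ∧ nrad (A * X * B - B * Y * A)
      ≤ 2 * Real.sqrt 2 * ‖B‖ * max ‖X‖ ‖Y‖
        * Real.sqrt ((nrad A) ^ 2 - (1/4) * |‖reP A + imP A‖ ^ 2 - ‖reP A - imP A‖ ^ 2|) := by
  set s := √(nrad A ^ 2 - 1 / 4 * |‖reP A + imP A‖ ^ 2 - ‖reP A - imP A‖ ^ 2|)
  have hbound : ∀ x : H, ‖x‖ = 1 → ‖⟪(A * X * B) x, x⟫_ℂ‖ + ‖⟪(B * Y * A) x, x⟫_ℂ‖
      ≤ 2 * √2 * ‖B‖ * max ‖X‖ ‖Y‖ * s := fun x hx =>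
    calc _ ≤ ‖B‖ * max ‖X‖ ‖Y‖ * (‖A x‖ + ‖adjoint A x‖) * ‖x‖ :=
          norm_inner_mul_mul_add_norm_inner_mul_mul_le A B X Y x
      _ ≤ ‖B‖ * max ‖X‖ ‖Y‖ * (2 * √2 * s) * 1 := by
          rw [hx]; gcongr; exact norm_apply_add_norm_adjoint_apply_le A hx
      _ = 2 * √2 * ‖B‖ * max ‖X‖ ‖Y‖ * s := by ring
  have hM : 0 ≤ 2 * √2 * ‖B‖ * max ‖X‖ ‖Y‖ * s := by positivity
  refine ⟨nrad_le hM fun x hx => le_trans ?_ (hbound x hx),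
    nrad_le hM fun x hx => le_trans ?_ (hbound x hx)⟩
  · rw [add_apply, inner_add_left]; exact norm_add_le _ _
  · rw [sub_apply, inner_sub_left]; exact norm_sub_le _ _
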